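/- arXiv:1907.01605 — 3 statements merged into one kernel-verified Lean document; each statement's English description precedes it below -/
import Mathlib

section
/- Let (ρₙ) be a sequence of measures on ℝ₊ with ∫ x dρₙ(x) ≤ 2c for all n, and let ρ be a measure with ∫ x dρ(x) ≤ c. Then ∫ f dρₙ → ∫ f dρ for all bounded continuous functions f : ℝ₊ → ℝ that vanish in a neighborhood of zero if and only if ρₙ → ρ vaguely. -/
open MeasureTheory Filter

/-- Vague convergence of measures on `ℝ₊ = (0,∞)`: convergence of integrals of continuous
functions with compact support contained in `(0,∞)` (i.e. vanishing near `0`). -/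
def VagueTendsto (ρn : ℕ → Measure ℝ) (ρ : Measure ℝ) : Prop :=
  ∀ f : ℝ → ℝ, Continuous f → HasCompactSupport f →
    (∃ ε > 0, ∀ x : ℝ, x < ε → f x = 0) →
    Tendsto (fun n => ∫ x, f x ∂(ρn n)) atTop (nhds (∫ x, f x ∂ρ))

private lemma tailMeas {μ : Measure ℝ} {M ε : ℝ} (hε : 0 < ε) (hM : 0 ≤ M)
    (hmom : ∫⁻ x, ENNReal.ofReal x ∂μ ≤ ENNReal.ofReal M) :
    (μ (Set.Ici ε)).toReal ≤ M / ε ∧ μ (Set.Ici ε) < ⊤ := by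
  have hmeas : AEMeasurable (fun x : ℝ => ENNReal.ofReal x) μ :=
    ENNReal.measurable_ofReal.aemeasurable
  have h := mul_meas_ge_le_lintegral₀ (ε := ENNReal.ofReal ε) hmeas
  have hsub : Set.Ici ε ⊆ {x : ℝ | ENNReal.ofReal ε ≤ ENNReal.ofReal x} :=
    fun x hx => ENNReal.ofReal_le_ofReal hx
  have h1 : ENNReal.ofReal ε * μ (Set.Ici ε) ≤ ENNReal.ofReal M :=
    le_trans (mul_le_mul_right (measure_mono hsub) _) (le_trans h hmom)
  have h2 : μ (Set.Ici ε) ≤ ENNReal.ofReal (M / ε) := by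
    rw [ENNReal.ofReal_div_of_pos hε]
    rw [ENNReal.le_div_iff_mul_le (Or.inl (by simp only [ne_eq, ENNReal.ofReal_eq_zero, not_le]; exact hε)) (Or.inl ENNReal.ofReal_ne_top)]
    rwa [mul_comm]
  exact ⟨ENNReal.toReal_le_of_le_ofReal (div_nonneg hM hε.le) h2,
    lt_of_le_of_lt h2 ENNReal.ofReal_lt_top⟩

private lemma integrable_of_bdd {μ : Measure ℝ} {f : ℝ → ℝ} {C ε : ℝ} (hε : 0 < ε)
    (hf : Continuous f) (hbd : ∀ x, |f x| ≤ C) (hz : ∀ x < ε, f x = 0)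
    (hfin : μ (Set.Ici ε) < ⊤) : Integrable f μ := by
  have hgi : Integrable (Set.indicator (Set.Ici ε) (fun _ => C)) μ :=
    (integrable_indicator_iff measurableSet_Ici).2 (integrableOn_const hfin.ne)
  refine Integrable.mono' hgi hf.aestronglyMeasurable (Filter.Eventually.of_forall fun x => ?_)
  by_cases hx : ε ≤ x
  · simpa [Set.indicator_of_mem (Set.mem_Ici.2 hx)] using hbd x
  · simp [hz x (lt_of_not_ge hx), Set.indicator_of_notMem (fun h => hx (Set.mem_Ici.1 h))]

private lemma tail_int_bound {μ : Measure ℝ} {f g : ℝ → ℝ} {C R : ℝ}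
    (hfi : Integrable f μ) (hgi : Integrable g μ)
    (hfg : ∀ x < R, f x = g x) (hbd : ∀ x, |f x - g x| ≤ C)
    (hfin : μ (Set.Ici R) < ⊤) :
    |∫ x, f x ∂μ - ∫ x, g x ∂μ| ≤ C * (μ (Set.Ici R)).toReal := by
  rw [← integral_sub hfi hgi]
  have hind : Integrable (Set.indicator (Set.Ici R) (fun _ => C)) μ :=
    (integrable_indicator_iff measurableSet_Ici).2 (integrableOn_const hfin.ne)
  have h1 : |∫ x, (f x - g x) ∂μ| ≤ ∫ x, |f x - g x| ∂μ := by
    simpa using norm_integral_le_integral_norm (fun x => f x - g x) (μ := μ)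
  refine h1.trans ?_
  have h2 : ∫ x, |f x - g x| ∂μ ≤ ∫ x, Set.indicator (Set.Ici R) (fun _ => C) x ∂μ := by
    refine integral_mono (hfi.sub hgi).abs hind fun x => ?_
    by_cases hx : R ≤ x
    · simpa [Set.indicator_of_mem (Set.mem_Ici.2 hx)] using hbd x
    · simp [hfg x (lt_of_not_ge hx), Set.indicator_of_notMem (fun h => hx (Set.mem_Ici.1 h))]
  refine h2.trans ?_
  rw [integral_indicator_const _ measurableSet_Ici]
  simp [mul_comm]
  exact le_rfl

/-- Let `(ρₙ)` be measures on `ℝ₊` with `∫ x dρₙ(x) ≤ 2c` for all `n`, and `ρ` a measure with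
`∫ x dρ(x) ≤ c`.  Then `∫ f dρₙ → ∫ f dρ` for all bounded continuous `f : ℝ₊ → ℝ` vanishing in
a neighborhood of zero if and only if `ρₙ → ρ` vaguely. -/
theorem boundedCont_iff_vague (ρn : ℕ → Measure ℝ) (ρ : Measure ℝ) (c : ℝ) (hc : 0 < c)
    (hsuppn : ∀ n, (ρn n) (Set.Iic 0) = 0) (hsupp : ρ (Set.Iic 0) = 0)
    (hmomn : ∀ n, ∫⁻ x, ENNReal.ofReal x ∂(ρn n) ≤ ENNReal.ofReal (2 * c))
    (hmom : ∫⁻ x, ENNReal.ofReal x ∂ρ ≤ ENNReal.ofReal c) :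
    (∀ f : ℝ → ℝ, Continuous f → (∃ C : ℝ, ∀ x, |f x| ≤ C) →
        (∃ ε > 0, ∀ x : ℝ, x < ε → f x = 0) →
        Tendsto (fun n => ∫ x, f x ∂(ρn n)) atTop (nhds (∫ x, f x ∂ρ)))
      ↔ VagueTendsto ρn ρ := by
  constructor
  · -- easy direction: compactly supported functions are bounded
    intro H f hf hcs hvan
    refine H f hf ?_ hvan
    obtain ⟨C, hC⟩ := (hf.abs).bounded_above_of_compact_support hcs.abs
    exact ⟨C, fun x => by simpa using hC x⟩
  · intro H f hf ⟨C, hC⟩ ⟨ε, hε, hz⟩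
    have hC0 : 0 ≤ C := (abs_nonneg _).trans (hC 0)
    -- integrability
    have hfinn : ∀ n, (ρn n) (Set.Ici ε) < ⊤ :=
      fun n => (tailMeas hε (by linarith) (hmomn n)).2
    have hfinρ : ρ (Set.Ici ε) < ⊤ := (tailMeas hε hc.le hmom).2
    have hintn : ∀ n, Integrable f (ρn n) :=
      fun n => integrable_of_bdd hε hf hC hz (hfinn n)
    have hintρ : Integrable f ρ := integrable_of_bdd hε hf hC hz hfinρ
    rw [Metric.tendsto_atTop]
    intro δ hδ
    set R : ℝ := 6 * c * (C + 1) / δ with hRdef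
    have hR : 0 < R := by positivity
    -- cutoff
    set χ : ℝ → ℝ := fun x => min 1 (max 0 (R + 1 - x)) with hχdef
    have hχcont : Continuous χ := by
      apply continuous_const.min
      exact continuous_const.max (by continuity)
    have hχ1 : ∀ x ≤ R, χ x = 1 := by
      intro x hx
      simp only [hχdef]
      rw [max_eq_right (by linarith), min_eq_left (by linarith)]
    have hχ0 : ∀ x, R + 1 ≤ x → χ x = 0 := by
      intro x hx
      simp only [hχdef]
      rw [max_eq_left (by linarith), min_eq_right (by linarith)]
    have hχmem : ∀ x, 0 ≤ χ x ∧ χ x ≤ 1 := by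
      intro x
      constructor
      · exact le_min zero_le_one (le_max_left _ _)
      · exact min_le_left _ _
    set g : ℝ → ℝ := fun x => f x * χ x with hgdef
    have hgcont : Continuous g := hf.mul hχcont
    have hgcs : HasCompactSupport g := by
      refine HasCompactSupport.intro (isCompact_Icc (a := ε) (b := R + 1)) fun x hx => ?_
      simp only [Set.mem_Icc, not_and_or, not_le] at hx
      rcases hx with hx | hx
      · simp [hgdef, hz x hx]
      · simp [hgdef, hχ0 x hx.le]
    have hgvan : ∃ ε' > 0, ∀ x : ℝ, x < ε' → g x = 0 :=
      ⟨ε, hε, fun x hx => by simp [hgdef, hz x hx]⟩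
    have hgtendsto := H g hgcont hgcs hgvan
    -- g bounded too, integrable
    have hgbd : ∀ x, |g x| ≤ C := by
      intro x
      calc |g x| = |f x| * |χ x| := abs_mul _ _
        _ ≤ C * 1 := mul_le_mul (hC x) (abs_le.2 ⟨by linarith [(hχmem x).1], (hχmem x).2⟩)
            (abs_nonneg _) hC0
        _ = C := mul_one C
    have hgz : ∀ x < ε, g x = 0 := fun x hx => by simp [hgdef, hz x hx]
    have hgintn : ∀ n, Integrable g (ρn n) :=
      fun n => integrable_of_bdd hε hgcont hgbd hgz (hfinn n)
    have hgintρ : Integrable g ρ := integrable_of_bdd hε hgcont hgbd hgz hfinρ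
    -- tail bounds
    have hfg : ∀ x < R, f x = g x := fun x hx => by simp [hgdef, hχ1 x hx.le]
    have hfgbd : ∀ x, |f x - g x| ≤ C := by
      intro x
      have : f x - g x = f x * (1 - χ x) := by simp [hgdef]; ring
      rw [this, abs_mul]
      calc |f x| * |1 - χ x| ≤ C * 1 :=
            mul_le_mul (hC x) (abs_le.2 ⟨by linarith [(hχmem x).2], by linarith [(hχmem x).1]⟩)
              (abs_nonneg _) hC0
        _ = C := mul_one C
    have htailn : ∀ n, |∫ x, f x ∂(ρn n) - ∫ x, g x ∂(ρn n)| ≤ C * (2 * c / R) := by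
      intro n
      refine (tail_int_bound (hintn n) (hgintn n) hfg hfgbd (tailMeas hR (by linarith) (hmomn n)).2).trans ?_
      exact mul_le_mul_of_nonneg_left (tailMeas hR (by linarith) (hmomn n)).1 hC0
    have htailρ : |∫ x, f x ∂ρ - ∫ x, g x ∂ρ| ≤ C * (c / R) := by
      refine (tail_int_bound hintρ hgintρ hfg hfgbd (tailMeas hR hc.le hmom).2).trans ?_
      exact mul_le_mul_of_nonneg_left (tailMeas hR hc.le hmom).1 hC0
    -- quantitative bounds
    have hRval : δ * R = 6 * c * (C + 1) := by
      rw [hRdef]; field_simp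
    have hRbound1 : C * (2 * c / R) < δ / 3 := by
      rw [mul_div_assoc', div_lt_div_iff₀ hR (by norm_num : (0:ℝ) < 3)]
      nlinarith [mul_nonneg hC0 hc.le]
    have hRbound2 : C * (c / R) < δ / 3 := by
      rw [mul_div_assoc', div_lt_div_iff₀ hR (by norm_num : (0:ℝ) < 3)]
      nlinarith [mul_nonneg hC0 hc.le]
    obtain ⟨N, hN⟩ := Metric.tendsto_atTop.1 hgtendsto (δ / 3) (by linarith)
    refine ⟨N, fun n hn => ?_⟩
    rw [Real.dist_eq]
    have hmid := hN n hn
    rw [Real.dist_eq] at hmid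
    have h3 : |∫ x, g x ∂ρ - ∫ x, f x ∂ρ| < δ / 3 := by
      rw [abs_sub_comm]; exact lt_of_le_of_lt htailρ hRbound2
    have h1 : |∫ x, f x ∂(ρn n) - ∫ x, g x ∂(ρn n)| < δ / 3 :=
      lt_of_le_of_lt (htailn n) hRbound1
    calc |∫ x, f x ∂(ρn n) - ∫ x, f x ∂ρ|
        ≤ |∫ x, f x ∂(ρn n) - ∫ x, g x ∂ρ| + |∫ x, g x ∂ρ - ∫ x, f x ∂ρ| :=
          abs_sub_le _ _ _
      _ ≤ (|∫ x, f x ∂(ρn n) - ∫ x, g x ∂(ρn n)| + |∫ x, g x ∂(ρn n) - ∫ x, g x ∂ρ|)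
            + |∫ x, g x ∂ρ - ∫ x, f x ∂ρ| := add_le_add_left (abs_sub_le _ _ _) _
      _ < δ / 3 + δ / 3 + δ / 3 := by
          apply add_lt_add (add_lt_add h1 hmid) h3
      _ = δ := by ring
end

section
/- In the preferential attachment setting above with ℓ = ℓ_{n,δ}, the second moment satisfies E[Sₙ(l+1)² | 𝓕ₗ] = E[Sₙ(l)²|𝓕ₗ]·(1 + 4/(ℓ+2l) + 2/(ℓ+2l)²) + 2Sₙ(l)/(ℓ+2l) ≤ Sₙ(l)²·((ℓ+2l+2)/(ℓ+2l))² + 2Sₙ(l)/(ℓ+2l), and hence E[Sₙ(l)²]/(ℓ+2l)² ≤ E[Sₙ(0)²]/ℓ² + O(1/(ℓ √mₙ)) whenever E[Sₙ(l)] = O((ℓ+2l)/√mₙ). -/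
open MeasureTheory ProbabilityTheory

lemma pa_integrable_of_bdd {Ω : Type*} {m0 : MeasurableSpace Ω} {μ : Measure Ω}
    [IsProbabilityMeasure μ] {f : Ω → ℝ} (hf : AEStronglyMeasurable f μ)
    (C : ℝ) (h : ∀ ω, |f ω| ≤ C) : Integrable f μ :=
  Integrable.mono' (integrable_const C) hf
    (Filter.Eventually.of_forall (by simpa [Real.norm_eq_abs] using h))

set_option maxHeartbeats 1000000 in
open Classical in
/-- **Second-moment recursion for the preferential attachment weight process.**
With the two-step preferential attachment transition for `Sₙ(l)`:
`E[Sₙ(l+1)²|𝓕ₗ] = Sₙ(l)²(1 + 4/(ℓ+2l) + 2/(ℓ+2l)²) + 2Sₙ(l)/(ℓ+2l)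
  ≤ Sₙ(l)²((ℓ+2l+2)/(ℓ+2l))² + 2Sₙ(l)/(ℓ+2l)`,
and hence `E[Sₙ(l)²]/(ℓ+2l)² ≤ E[Sₙ(0)²]/ℓ² + O(1/(ℓ√mₙ))` whenever
`E[Sₙ(l)] = O((ℓ+2l)/√mₙ)`. -/
theorem pa_weight_second_moment {Ω : Type*} {m0 : MeasurableSpace Ω}
    (μ : Measure Ω) [IsProbabilityMeasure μ]
    (𝓕 : Filtration ℕ m0) (ℓ : ℝ) (hℓ : 0 < ℓ)
    (S : ℕ → Ω → ℝ)
    (hadapt : Adapted 𝓕 S)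
    (hbdd : ∀ l ω, 0 ≤ S l ω ∧ S l ω ≤ ℓ + 2 * l)
    (hstep : ∀ l ω, S (l + 1) ω = S l ω ∨ S (l + 1) ω = S l ω + 1
      ∨ S (l + 1) ω = S l ω + 2)
    (h2 : ∀ l : ℕ, μ[(fun ω => if S (l + 1) ω = S l ω + 2 then (1:ℝ) else 0) | 𝓕 l]
      =ᵐ[μ] fun ω => (S l ω / (ℓ + 2 * l)) ^ 2)
    (h1 : ∀ l : ℕ, μ[(fun ω => if S (l + 1) ω = S l ω + 1 then (1:ℝ) else 0) | 𝓕 l]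
      =ᵐ[μ] fun ω => 2 * S l ω * (ℓ + 2 * l - S l ω) / (ℓ + 2 * l) ^ 2) :
    (∀ l : ℕ, μ[(fun ω => (S (l + 1) ω) ^ 2) | 𝓕 l]
        =ᵐ[μ] fun ω => (S l ω) ^ 2 * (1 + 4 / (ℓ + 2 * l) + 2 / (ℓ + 2 * l) ^ 2)
          + 2 * S l ω / (ℓ + 2 * l))
    ∧ (∀ (l : ℕ) (ω : Ω),
        (S l ω) ^ 2 * (1 + 4 / (ℓ + 2 * l) + 2 / (ℓ + 2 * l) ^ 2)
            + 2 * S l ω / (ℓ + 2 * l)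
          ≤ (S l ω) ^ 2 * ((ℓ + 2 * l + 2) / (ℓ + 2 * l)) ^ 2
            + 2 * S l ω / (ℓ + 2 * l))
    ∧ ∀ (mn C' : ℝ), 0 < mn → 1 ≤ ℓ →
        (∀ l : ℕ, ∫ ω, S l ω ∂μ ≤ C' * (ℓ + 2 * l) / Real.sqrt mn) →
        ∀ l : ℕ, (∫ ω, (S l ω) ^ 2 ∂μ) / (ℓ + 2 * l) ^ 2
          ≤ (∫ ω, (S 0 ω) ^ 2 ∂μ) / ℓ ^ 2 + 3 * C' / (ℓ * Real.sqrt mn) := by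
  -- basic facts
  have hL : ∀ l : ℕ, (0:ℝ) < ℓ + 2 * l := fun l => by
    have : (0:ℝ) ≤ (l:ℝ) := Nat.cast_nonneg l
    linarith
  have hSmeas : ∀ l : ℕ, StronglyMeasurable (S l) :=
    fun l => ((hadapt l).mono (𝓕.le l) le_rfl).stronglyMeasurable
  have hSmeas' : ∀ l : ℕ, Measurable (S l) := fun l => (hSmeas l).measurable
  have hIntS : ∀ l : ℕ, Integrable (S l) μ := fun l =>
    pa_integrable_of_bdd (hSmeas l).aestronglyMeasurable (ℓ + 2 * l)
      (fun ω => abs_le.2 ⟨by linarith [(hbdd l ω).1, hL l], (hbdd l ω).2⟩)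
  have hIntS2 : ∀ l : ℕ, Integrable (fun ω => (S l ω) ^ 2) μ := fun l =>
    pa_integrable_of_bdd ((hSmeas l).pow 2).aestronglyMeasurable ((ℓ + 2 * l) ^ 2)
      (fun ω => by
        rw [abs_of_nonneg (sq_nonneg _)]
        exact pow_le_pow_left₀ (hbdd l ω).1 (hbdd l ω).2 2)
  -- indicator functions
  set I1 : ℕ → Ω → ℝ := fun l ω => if S (l + 1) ω = S l ω + 1 then (1:ℝ) else 0 with hI1
  set I2 : ℕ → Ω → ℝ := fun l ω => if S (l + 1) ω = S l ω + 2 then (1:ℝ) else 0 with hI2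
  have hI1meas : ∀ l : ℕ, Measurable (I1 l) := fun l => by
    refine Measurable.ite (measurableSet_eq_fun (hSmeas' (l+1)) ((hSmeas' l).add_const 1))
      measurable_const measurable_const
  have hI2meas : ∀ l : ℕ, Measurable (I2 l) := fun l => by
    refine Measurable.ite (measurableSet_eq_fun (hSmeas' (l+1)) ((hSmeas' l).add_const 2))
      measurable_const measurable_const
  have hIntG1 : ∀ l : ℕ, Integrable (fun ω => (2 * S l ω + 1) * I1 l ω) μ := fun l =>
    pa_integrable_of_bdd
      ((((hSmeas' l).const_mul 2).add_const 1).mul (hI1meas l)).aestronglyMeasurable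
      (2 * (ℓ + 2 * l) + 1)
      (fun ω => by
        have h1 := (hbdd l ω).1; have h2 := (hbdd l ω).2
        have : |I1 l ω| ≤ 1 := by simp only [hI1]; split <;> simp
        rw [abs_mul]
        calc |2 * S l ω + 1| * |I1 l ω| ≤ (2 * (ℓ + 2 * l) + 1) * 1 := by
              apply mul_le_mul _ this (abs_nonneg _) (by linarith [hL l])
              rw [abs_of_nonneg (by linarith)]; linarith
          _ = 2 * (ℓ + 2 * l) + 1 := by ring)
  have hIntG2 : ∀ l : ℕ, Integrable (fun ω => (4 * S l ω + 4) * I2 l ω) μ := fun l =>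
    pa_integrable_of_bdd
      ((((hSmeas' l).const_mul 4).add_const 4).mul (hI2meas l)).aestronglyMeasurable
      (4 * (ℓ + 2 * l) + 4)
      (fun ω => by
        have h1 := (hbdd l ω).1; have h2 := (hbdd l ω).2
        have : |I2 l ω| ≤ 1 := by simp only [hI2]; split <;> simp
        rw [abs_mul]
        calc |4 * S l ω + 4| * |I2 l ω| ≤ (4 * (ℓ + 2 * l) + 4) * 1 := by
              apply mul_le_mul _ this (abs_nonneg _) (by linarith [hL l])
              rw [abs_of_nonneg (by linarith)]; linarith
          _ = 4 * (ℓ + 2 * l) + 4 := by ring)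
  have hIntI1 : ∀ l : ℕ, Integrable (I1 l) μ := fun l =>
    pa_integrable_of_bdd (hI1meas l).aestronglyMeasurable 1
      (fun ω => by simp only [hI1]; split <;> simp)
  have hIntI2 : ∀ l : ℕ, Integrable (I2 l) μ := fun l =>
    pa_integrable_of_bdd (hI2meas l).aestronglyMeasurable 1
      (fun ω => by simp only [hI2]; split <;> simp)
  -- pointwise decomposition
  have hdecomp : ∀ l : ℕ, (fun ω => (S (l + 1) ω) ^ 2)
      = (fun ω => (S l ω) ^ 2)
        + ((fun ω => (2 * S l ω + 1) * I1 l ω) + fun ω => (4 * S l ω + 4) * I2 l ω) := by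
    intro l
    funext ω
    simp only [Pi.add_apply, hI1, hI2]
    rcases hstep l ω with h | h | h <;> rw [h]
    · rw [if_neg (by intro hc; linarith [hc ▸ (by linarith : S l ω < S l ω + 1)]),
        if_neg (by intro hc; linarith)]
      ring
    · rw [if_pos rfl, if_neg (by intro hc; linarith)]
      ring
    · rw [if_neg (by intro hc; linarith), if_pos rfl]
      ring
  -- Part 1
  have part1 : ∀ l : ℕ, μ[(fun ω => (S (l + 1) ω) ^ 2) | 𝓕 l]
      =ᵐ[μ] fun ω => (S l ω) ^ 2 * (1 + 4 / (ℓ + 2 * l) + 2 / (ℓ + 2 * l) ^ 2)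
        + 2 * S l ω / (ℓ + 2 * l) := by
    intro l
    have hm := 𝓕.le l
    have e0 : μ[(fun ω => (S (l + 1) ω) ^ 2) | 𝓕 l]
        = μ[(fun ω => (S l ω) ^ 2)
          + ((fun ω => (2 * S l ω + 1) * I1 l ω) + fun ω => (4 * S l ω + 4) * I2 l ω) | 𝓕 l] := by
      rw [← hdecomp l]
    have eA := condExp_add (μ := μ) (m := 𝓕 l) (hIntS2 l) ((hIntG1 l).add (hIntG2 l))
    have eB := condExp_add (μ := μ) (m := 𝓕 l) (hIntG1 l) (hIntG2 l)
    have eSq : μ[(fun ω => (S l ω) ^ 2) | 𝓕 l] = fun ω => (S l ω) ^ 2 :=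
      condExp_of_stronglyMeasurable hm ((hadapt l).stronglyMeasurable.pow 2) (hIntS2 l)
    have eM1 : μ[(fun ω => (2 * S l ω + 1) * I1 l ω) | 𝓕 l]
        =ᵐ[μ] (fun ω => 2 * S l ω + 1) * μ[I1 l | 𝓕 l] :=
      condExp_mul_of_stronglyMeasurable_left (((hadapt l).stronglyMeasurable.const_mul 2).add_const 1)
        (hIntG1 l) (hIntI1 l)
    have eM2 : μ[(fun ω => (4 * S l ω + 4) * I2 l ω) | 𝓕 l]
        =ᵐ[μ] (fun ω => 4 * S l ω + 4) * μ[I2 l | 𝓕 l] :=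
      condExp_mul_of_stronglyMeasurable_left (((hadapt l).stronglyMeasurable.const_mul 4).add_const 4)
        (hIntG2 l) (hIntI2 l)
    rw [e0]
    filter_upwards [eA, eB, eM1, eM2, h1 l, h2 l] with ω hA hB hM1 hM2 hp1 hp2
    rw [hA]
    simp only [Pi.add_apply, Pi.mul_apply] at *
    rw [eSq, hB, hM1, hM2, hp1, hp2]
    have hLpos := hL l
    have hLne : (ℓ + 2 * l) ≠ 0 := ne_of_gt hLpos
    field_simp
    ring
  refine ⟨part1, ?_, ?_⟩
  -- Part 2
  · intro l ω
    have hLpos := hL l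
    have hs2 : 0 ≤ (S l ω) ^ 2 := sq_nonneg _
    have key : (1 + 4 / (ℓ + 2 * l) + 2 / (ℓ + 2 * l) ^ 2)
        ≤ ((ℓ + 2 * l + 2) / (ℓ + 2 * l)) ^ 2 := by
      have e : ((ℓ + 2 * l + 2) / (ℓ + 2 * l)) ^ 2
          = 1 + 4 / (ℓ + 2 * l) + 4 / (ℓ + 2 * l) ^ 2 := by
        field_simp; ring
      rw [e]
      have h24 : (2:ℝ) / (ℓ + 2 * l) ^ 2 ≤ 4 / (ℓ + 2 * l) ^ 2 := by
        gcongr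
        norm_num
      linarith
    nlinarith [mul_le_mul_of_nonneg_left key hs2]
  -- Part 3
  · intro mn C' hmn hℓ1 hsum
    have hsq : 0 < Real.sqrt mn := Real.sqrt_pos.mpr hmn
    have hC' : 0 ≤ C' := by
      have h0 := hsum 0
      have hint0 : 0 ≤ ∫ ω, S 0 ω ∂μ := integral_nonneg (fun ω => (hbdd 0 ω).1)
      simp only [Nat.cast_zero, mul_zero, add_zero] at h0
      by_contra hc
      push_neg at hc
      have : C' * ℓ / Real.sqrt mn < 0 := by
        apply div_neg_of_neg_of_pos _ hsq
        exact mul_neg_of_neg_of_pos hc hℓ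
      linarith
    -- one-step inequality for second moments
    have key : ∀ l : ℕ, ∫ ω, (S (l + 1) ω) ^ 2 ∂μ
        ≤ ((ℓ + 2 * l + 2) / (ℓ + 2 * l)) ^ 2 * ∫ ω, (S l ω) ^ 2 ∂μ
          + (2 / (ℓ + 2 * l)) * ∫ ω, S l ω ∂μ := by
      intro l
      have hLpos := hL l
      have e1 : ∫ ω, (S (l + 1) ω) ^ 2 ∂μ
          = ∫ ω, ((S l ω) ^ 2 * (1 + 4 / (ℓ + 2 * l) + 2 / (ℓ + 2 * l) ^ 2)
              + 2 * S l ω / (ℓ + 2 * l)) ∂μ := by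
        rw [← integral_condExp (𝓕.le l)]
        exact integral_congr_ae (part1 l)
      rw [e1]
      have hrw1 : (fun ω => (S l ω) ^ 2 * (1 + 4 / (ℓ + 2 * l) + 2 / (ℓ + 2 * l) ^ 2)
            + 2 * S l ω / (ℓ + 2 * l))
          = fun ω => (1 + 4 / (ℓ + 2 * l) + 2 / (ℓ + 2 * l) ^ 2) * (S l ω) ^ 2
            + (2 / (ℓ + 2 * l)) * S l ω := by
        funext ω; ring
      have hrw2 : (fun ω => (S l ω) ^ 2 * ((ℓ + 2 * l + 2) / (ℓ + 2 * l)) ^ 2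
            + 2 * S l ω / (ℓ + 2 * l))
          = fun ω => ((ℓ + 2 * l + 2) / (ℓ + 2 * l)) ^ 2 * (S l ω) ^ 2
            + (2 / (ℓ + 2 * l)) * S l ω := by
        funext ω; ring
      have hint1 : Integrable (fun ω => (1 + 4 / (ℓ + 2 * l) + 2 / (ℓ + 2 * l) ^ 2) * (S l ω) ^ 2
          + (2 / (ℓ + 2 * l)) * S l ω) μ :=
        ((hIntS2 l).const_mul _).add ((hIntS l).const_mul _)
      have hint2 : Integrable (fun ω => ((ℓ + 2 * l + 2) / (ℓ + 2 * l)) ^ 2 * (S l ω) ^ 2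
          + (2 / (ℓ + 2 * l)) * S l ω) μ :=
        ((hIntS2 l).const_mul _).add ((hIntS l).const_mul _)
      calc ∫ ω, ((S l ω) ^ 2 * (1 + 4 / (ℓ + 2 * l) + 2 / (ℓ + 2 * l) ^ 2)
              + 2 * S l ω / (ℓ + 2 * l)) ∂μ
          ≤ ∫ ω, (((ℓ + 2 * l + 2) / (ℓ + 2 * l)) ^ 2 * (S l ω) ^ 2
              + (2 / (ℓ + 2 * l)) * S l ω) ∂μ := by
            rw [hrw1]
            refine integral_mono hint1 hint2 (fun ω => ?_)
            have hs2 : 0 ≤ (S l ω) ^ 2 := sq_nonneg _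
            have keyc : (1 + 4 / (ℓ + 2 * l) + 2 / (ℓ + 2 * l) ^ 2)
                ≤ ((ℓ + 2 * l + 2) / (ℓ + 2 * l)) ^ 2 := by
              have e : ((ℓ + 2 * l + 2) / (ℓ + 2 * l)) ^ 2
                  = 1 + 4 / (ℓ + 2 * l) + 4 / (ℓ + 2 * l) ^ 2 := by
                field_simp; ring
              rw [e]
              have h24 : (2:ℝ) / (ℓ + 2 * l) ^ 2 ≤ 4 / (ℓ + 2 * l) ^ 2 := by
                gcongr
                norm_num
              linarith
            nlinarith [mul_le_mul_of_nonneg_right keyc hs2]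
        _ = ((ℓ + 2 * l + 2) / (ℓ + 2 * l)) ^ 2 * ∫ ω, (S l ω) ^ 2 ∂μ
              + (2 / (ℓ + 2 * l)) * ∫ ω, S l ω ∂μ := by
            rw [integral_add ((hIntS2 l).const_mul _) ((hIntS l).const_mul _),
              integral_const_mul, integral_const_mul]
    -- induction
    have main : ∀ l : ℕ, (∫ ω, (S l ω) ^ 2 ∂μ) / (ℓ + 2 * l) ^ 2
        ≤ (∫ ω, (S 0 ω) ^ 2 ∂μ) / ℓ ^ 2
          + (C' / Real.sqrt mn) * (1 / ℓ - 1 / (ℓ + 2 * l)) := by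
      intro l
      induction l with
      | zero => simp
      | succ l ih =>
        have hLpos := hL l
        have hL1pos : (0:ℝ) < ℓ + 2 * ((l:ℝ) + 1) := by linarith
        have hcast : (ℓ + 2 * ((l + 1 : ℕ) : ℝ)) = (ℓ + 2 * l) + 2 := by push_cast; ring
        have hk := key l
        have hb := hsum l
        have hSnn : 0 ≤ ∫ ω, S l ω ∂μ := integral_nonneg (fun ω => (hbdd l ω).1)
        -- divide by ((ℓ+2l)+2)^2 = (ℓ+2(l+1))^2
        have hden : (0:ℝ) < ((ℓ + 2 * l) + 2) ^ 2 := by positivity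
        have step : (∫ ω, (S (l+1) ω) ^ 2 ∂μ) / ((ℓ + 2 * l) + 2) ^ 2
            ≤ (∫ ω, (S l ω) ^ 2 ∂μ) / (ℓ + 2 * l) ^ 2
              + (C' / Real.sqrt mn) * (1 / (ℓ + 2 * l) - 1 / ((ℓ + 2 * l) + 2)) := by
          have h1' : (∫ ω, (S (l+1) ω) ^ 2 ∂μ) / ((ℓ + 2 * l) + 2) ^ 2
              ≤ (∫ ω, (S l ω) ^ 2 ∂μ) / (ℓ + 2 * l) ^ 2
                + (2 / (ℓ + 2 * l)) * (∫ ω, S l ω ∂μ) / ((ℓ + 2 * l) + 2) ^ 2 := by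
            rw [div_le_iff₀ hden]
            have : ((ℓ + 2 * l + 2) / (ℓ + 2 * l)) ^ 2 * ∫ ω, (S l ω) ^ 2 ∂μ
                = (∫ ω, (S l ω) ^ 2 ∂μ) / (ℓ + 2 * l) ^ 2 * ((ℓ + 2 * l) + 2) ^ 2 := by
              field_simp
            calc ∫ ω, (S (l+1) ω) ^ 2 ∂μ
                ≤ ((ℓ + 2 * l + 2) / (ℓ + 2 * l)) ^ 2 * ∫ ω, (S l ω) ^ 2 ∂μ
                  + (2 / (ℓ + 2 * l)) * ∫ ω, S l ω ∂μ := hk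
              _ = ((∫ ω, (S l ω) ^ 2 ∂μ) / (ℓ + 2 * l) ^ 2
                  + (2 / (ℓ + 2 * l)) * (∫ ω, S l ω ∂μ) / ((ℓ + 2 * l) + 2) ^ 2)
                  * ((ℓ + 2 * l) + 2) ^ 2 := by
                rw [add_mul, ← this]
                congr 1
                field_simp
          have h2' : (2 / (ℓ + 2 * l)) * (∫ ω, S l ω ∂μ) / ((ℓ + 2 * l) + 2) ^ 2
              ≤ (C' / Real.sqrt mn) * (1 / (ℓ + 2 * l) - 1 / ((ℓ + 2 * l) + 2)) := by
            have hb' : (2 / (ℓ + 2 * l)) * (∫ ω, S l ω ∂μ)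
                ≤ (2 / (ℓ + 2 * l)) * (C' * (ℓ + 2 * l) / Real.sqrt mn) :=
              mul_le_mul_of_nonneg_left hb (by positivity)
            have heq : (2 / (ℓ + 2 * l)) * (C' * (ℓ + 2 * l) / Real.sqrt mn)
                = 2 * C' / Real.sqrt mn := by field_simp
            have hX : (2 / (ℓ + 2 * l)) * (∫ ω, S l ω ∂μ) ≤ 2 * C' / Real.sqrt mn := by
              rw [← heq]; exact hb'
            rw [div_le_iff₀ hden]
            have e : (C' / Real.sqrt mn) * (1 / (ℓ + 2 * l) - 1 / ((ℓ + 2 * l) + 2))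
                * ((ℓ + 2 * l) + 2) ^ 2
                = (2 * C' / Real.sqrt mn) * (((ℓ + 2 * l) + 2) / (ℓ + 2 * l)) := by
              field_simp
              ring
            rw [e]
            have hfrac : (1:ℝ) ≤ ((ℓ + 2 * l) + 2) / (ℓ + 2 * l) := by
              rw [le_div_iff₀ hLpos]; linarith
            have hc2 : (0:ℝ) ≤ 2 * C' / Real.sqrt mn :=
              div_nonneg (by linarith) hsq.le
            have hm' := mul_le_mul_of_nonneg_left hfrac hc2
            rw [mul_one] at hm'
            linarith
          linarith
        calc (∫ ω, (S (l+1) ω) ^ 2 ∂μ) / (ℓ + 2 * ((l+1:ℕ):ℝ)) ^ 2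
            = (∫ ω, (S (l+1) ω) ^ 2 ∂μ) / ((ℓ + 2 * l) + 2) ^ 2 := by rw [hcast]
          _ ≤ (∫ ω, (S l ω) ^ 2 ∂μ) / (ℓ + 2 * l) ^ 2
              + (C' / Real.sqrt mn) * (1 / (ℓ + 2 * l) - 1 / ((ℓ + 2 * l) + 2)) := step
          _ ≤ (∫ ω, (S 0 ω) ^ 2 ∂μ) / ℓ ^ 2
              + (C' / Real.sqrt mn) * (1 / ℓ - 1 / (ℓ + 2 * l))
              + (C' / Real.sqrt mn) * (1 / (ℓ + 2 * l) - 1 / ((ℓ + 2 * l) + 2)) := by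
            linarith
          _ = (∫ ω, (S 0 ω) ^ 2 ∂μ) / ℓ ^ 2
              + (C' / Real.sqrt mn) * (1 / ℓ - 1 / ((ℓ + 2 * l) + 2)) := by ring
          _ = (∫ ω, (S 0 ω) ^ 2 ∂μ) / ℓ ^ 2
              + (C' / Real.sqrt mn) * (1 / ℓ - 1 / (ℓ + 2 * ((l+1:ℕ):ℝ))) := by rw [hcast]
    intro l
    have hLpos := hL l
    have hfin : (C' / Real.sqrt mn) * (1 / ℓ - 1 / (ℓ + 2 * l))
        ≤ 3 * C' / (ℓ * Real.sqrt mn) := by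
      have h1 : 1 / ℓ - 1 / (ℓ + 2 * l) ≤ 1 / ℓ := by
        have : 0 ≤ 1 / (ℓ + 2 * l) := by positivity
        linarith
      have hcnn : 0 ≤ C' / Real.sqrt mn := div_nonneg hC' hsq.le
      calc (C' / Real.sqrt mn) * (1 / ℓ - 1 / (ℓ + 2 * l))
          ≤ (C' / Real.sqrt mn) * (1 / ℓ) := mul_le_mul_of_nonneg_left h1 hcnn
        _ = C' / (ℓ * Real.sqrt mn) := by
            rw [div_mul_eq_mul_div, mul_one_div, div_div]
        _ ≤ 3 * C' / (ℓ * Real.sqrt mn) := by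
            gcongr
            linarith
    linarith [main l]
end

section
/- Let S₁, S₂ be disjoint sets of half-edges in the configuration model with ℓₙ half-edges, |Sⱼ| = sⱼ, s = s₁ + s₂ < ℓₙ. Define λ₁₁ = Σ_{α=1}^{s₁} (s₁−α)/(ℓₙ−α), λ₁₂ = Σ_{α=1}^{s₁} s₂/(ℓₙ−α), λ₂₂ = Σ_{α=s₁+1}^{s} (s₂−(α−s₁))/(ℓₙ−α). Then |λ₁₁ − s₁²/(2ℓₙ)| + |λ₁₂ − s₁s₂/ℓₙ| + |λ₂₂ − s₂²/(2ℓₙ)| ≤ max{ s/ℓₙ, s³/(2ℓₙ(ℓₙ−s)) }. -/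
open Finset

lemma sumA (n : ℕ) : ∑ α ∈ Icc 1 n, ((n : ℝ) - α) = ((n : ℝ) ^ 2 - n) / 2 := by
  induction n with
  | zero => simp
  | succ n ih =>
    rw [Finset.sum_Icc_succ_top (by omega)]
    have h : ∀ α ∈ Icc 1 n, (((n + 1 : ℕ) : ℝ) - α) = ((n : ℝ) - α) + 1 := by
      intro α _; push_cast; ring
    rw [Finset.sum_congr rfl h, Finset.sum_add_distrib, ih, Finset.sum_const, Nat.card_Icc]
    push_cast [Nat.add_sub_cancel]
    ring

lemma sumB (n : ℕ) : ∑ α ∈ Icc 1 n, (α : ℝ) = ((n : ℝ) ^ 2 + n) / 2 := by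
  induction n with
  | zero => simp
  | succ n ih =>
    rw [Finset.sum_Icc_succ_top (by omega), ih]
    push_cast
    ring

lemma sumC (n : ℕ) : ∑ α ∈ Icc 1 n, ((n : ℝ) - α) * α = ((n : ℝ) ^ 3 - n) / 6 := by
  induction n with
  | zero => simp
  | succ n ih =>
    rw [Finset.sum_Icc_succ_top (by omega)]
    have h : ∀ α ∈ Icc 1 n, (((n + 1 : ℕ) : ℝ) - α) * α = ((n : ℝ) - α) * α + α := by
      intro α _; push_cast; ring
    rw [Finset.sum_congr rfl h, Finset.sum_add_distrib, ih, sumB]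
    push_cast
    ring

lemma term_bounds {a x L S : ℝ} (ha : 0 ≤ a) (hx : 0 ≤ x) (hxS : x ≤ S) (hSL : S < L) :
    a / L ≤ a / (L - x) ∧ a / (L - x) ≤ a / L + a * x / (L * (L - S)) := by
  have hLx : 0 < L - x := by linarith
  have hLS : 0 < L - S := by linarith
  have hL : 0 < L := by linarith
  have h : a / (L - x) - a / L = a * x / (L * (L - x)) := by
    field_simp
    ring
  have hpos : 0 ≤ a * x / (L * (L - x)) := by positivity
  have h2 : a * x / (L * (L - x)) ≤ a * x / (L * (L - S)) := by
    gcongr <;> first | positivity | linarith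
  exact ⟨by linarith, by linarith⟩

set_option maxHeartbeats 1000000 in
/-- **Poisson parameters of the sequential pairing.**
For disjoint sets of half-edges of sizes `s₁, s₂` with `s = s₁ + s₂ < ℓₙ`, the
Bernoulli-sum parameters
`λ₁₁ = Σ_{α=1}^{s₁} (s₁−α)/(ℓₙ−α)`, `λ₁₂ = Σ_{α=1}^{s₁} s₂/(ℓₙ−α)`,
`λ₂₂ = Σ_{α=s₁+1}^{s} (s₂−(α−s₁))/(ℓₙ−α)` satisfy
`|λ₁₁ − s₁²/(2ℓₙ)| + |λ₁₂ − s₁s₂/ℓₙ| + |λ₂₂ − s₂²/(2ℓₙ)|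
  ≤ max (s/ℓₙ) (s³/(2ℓₙ(ℓₙ−s)))`. -/
theorem poisson_parameter_bound (s₁ s₂ ℓ : ℕ) (hs : s₁ + s₂ < ℓ) :
    |(∑ α ∈ Finset.Icc 1 s₁, ((s₁ : ℝ) - α) / ((ℓ : ℝ) - α))
        - (s₁ : ℝ) ^ 2 / (2 * ℓ)|
      + |(∑ α ∈ Finset.Icc 1 s₁, (s₂ : ℝ) / ((ℓ : ℝ) - α))
        - (s₁ : ℝ) * s₂ / ℓ|
      + |(∑ α ∈ Finset.Icc (s₁ + 1) (s₁ + s₂), ((s₂ : ℝ) - ((α : ℝ) - s₁)) / ((ℓ : ℝ) - α))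
        - (s₂ : ℝ) ^ 2 / (2 * ℓ)|
      ≤ max (((s₁ : ℝ) + s₂) / ℓ)
          (((s₁ : ℝ) + s₂) ^ 3 / (2 * ℓ * ((ℓ : ℝ) - ((s₁ : ℝ) + s₂)))) := by
  have hSL : (s₁ : ℝ) + s₂ < (ℓ : ℝ) := by exact_mod_cast hs
  set L : ℝ := (ℓ : ℝ) with hLdef
  set S : ℝ := (s₁ : ℝ) + s₂ with hSdef
  have hS0 : 0 ≤ S := by positivity
  have hL : 0 < L := lt_of_le_of_lt hS0 hSL
  have hLS : 0 < L - S := by linarith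
  have hs₂0 : (0:ℝ) ≤ s₂ := by positivity
  have hs₁0 : (0:ℝ) ≤ s₁ := by positivity
  -- abbreviations for the three sums
  set T₁ := ∑ α ∈ Finset.Icc 1 s₁, ((s₁ : ℝ) - α) / (L - α) with hT₁
  set T₂ := ∑ α ∈ Finset.Icc 1 s₁, (s₂ : ℝ) / (L - α) with hT₂
  set T₃ := ∑ α ∈ Finset.Icc (s₁ + 1) (s₁ + s₂), ((s₂ : ℝ) - ((α : ℝ) - s₁)) / (L - α)
    with hT₃
  -- membership facts over Icc 1 s₁
  have mem1 : ∀ α ∈ Icc 1 s₁, 0 ≤ (s₁ : ℝ) - α ∧ 0 ≤ (α : ℝ) ∧ (α : ℝ) ≤ S := by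
    intro α hα
    rw [Finset.mem_Icc] at hα
    have h1 : (α : ℝ) ≤ (s₁ : ℝ) := by exact_mod_cast hα.2
    exact ⟨by linarith, by positivity, by rw [hSdef]; linarith⟩
  -- first sum
  have e1 : ∑ α ∈ Icc 1 s₁, ((s₁ : ℝ) - α) / L = ((s₁ : ℝ) ^ 2 - s₁) / (2 * L) := by
    rw [← Finset.sum_div, sumA]
    rw [div_div]
  have e1' : ∑ α ∈ Icc 1 s₁, (((s₁ : ℝ) - α) / L + ((s₁ : ℝ) - α) * α / (L * (L - S)))
      = ((s₁ : ℝ) ^ 2 - s₁) / (2 * L) + ((s₁ : ℝ) ^ 3 - s₁) / (6 * (L * (L - S))) := by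
    rw [Finset.sum_add_distrib, e1, ← Finset.sum_div, sumC, div_div]
  have h1l : ((s₁ : ℝ) ^ 2 - s₁) / (2 * L) ≤ T₁ := by
    rw [← e1, hT₁]
    refine Finset.sum_le_sum fun α hα => ?_
    obtain ⟨ha, hx, hxS⟩ := mem1 α hα
    exact (term_bounds ha hx hxS hSL).1
  have h1u : T₁ ≤ ((s₁ : ℝ) ^ 2 - s₁) / (2 * L) + ((s₁ : ℝ) ^ 3 - s₁) / (6 * (L * (L - S))) := by
    rw [← e1', hT₁]
    refine Finset.sum_le_sum fun α hα => ?_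
    obtain ⟨ha, hx, hxS⟩ := mem1 α hα
    exact (term_bounds ha hx hxS hSL).2
  -- second sum
  have e2 : ∑ α ∈ Icc 1 s₁, (s₂ : ℝ) / L = (s₁ : ℝ) * s₂ / L := by
    rw [← Finset.sum_div, Finset.sum_const, Nat.card_Icc, Nat.add_sub_cancel]
    push_cast
    ring
  have e2' : ∑ α ∈ Icc 1 s₁, ((s₂ : ℝ) / L + (s₂ : ℝ) * α / (L * (L - S)))
      = (s₁ : ℝ) * s₂ / L + (s₂ : ℝ) * (((s₁ : ℝ) ^ 2 + s₁) / 2) / (L * (L - S)) := by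
    rw [Finset.sum_add_distrib, e2, ← Finset.sum_div, ← Finset.mul_sum, sumB]
  have h2l : (s₁ : ℝ) * s₂ / L ≤ T₂ := by
    rw [← e2, hT₂]
    refine Finset.sum_le_sum fun α hα => ?_
    obtain ⟨_, hx, hxS⟩ := mem1 α hα
    exact (term_bounds hs₂0 hx hxS hSL).1
  have h2u : T₂ ≤ (s₁ : ℝ) * s₂ / L + (s₂ : ℝ) * (((s₁ : ℝ) ^ 2 + s₁) / 2) / (L * (L - S)) := by
    rw [← e2', hT₂]
    refine Finset.sum_le_sum fun α hα => ?_
    obtain ⟨_, hx, hxS⟩ := mem1 α hα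
    exact (term_bounds hs₂0 hx hxS hSL).2
  -- third sum: reindex
  have reidx : T₃ = ∑ β ∈ Icc 1 s₂, ((s₂ : ℝ) - β) / (L - ((s₁ : ℝ) + β)) := by
    rw [hT₃, ← Finset.map_add_left_Icc 1 s₂ s₁, Finset.sum_map]
    refine Finset.sum_congr rfl fun β hβ => ?_
    simp only [addLeftEmbedding_apply]
    push_cast
    ring_nf
  have mem3 : ∀ β ∈ Icc 1 s₂, 0 ≤ (s₂ : ℝ) - β ∧ 0 ≤ (s₁ : ℝ) + β ∧ (s₁ : ℝ) + β ≤ S := by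
    intro β hβ
    rw [Finset.mem_Icc] at hβ
    have h1 : (β : ℝ) ≤ (s₂ : ℝ) := by exact_mod_cast hβ.2
    have h0 : (0:ℝ) ≤ β := by positivity
    exact ⟨by linarith, by linarith, by rw [hSdef]; linarith⟩
  have e3 : ∑ β ∈ Icc 1 s₂, ((s₂ : ℝ) - β) / L = ((s₂ : ℝ) ^ 2 - s₂) / (2 * L) := by
    rw [← Finset.sum_div, sumA, div_div]
  have e3' : ∑ β ∈ Icc 1 s₂, (((s₂ : ℝ) - β) / L
        + ((s₂ : ℝ) - β) * ((s₁ : ℝ) + β) / (L * (L - S)))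
      = ((s₂ : ℝ) ^ 2 - s₂) / (2 * L)
        + ((s₁ : ℝ) * (((s₂ : ℝ) ^ 2 - s₂) / 2) + ((s₂ : ℝ) ^ 3 - s₂) / 6) / (L * (L - S)) := by
    rw [Finset.sum_add_distrib, e3, ← Finset.sum_div]
    congr 1
    congr 1
    have : ∀ β ∈ Icc 1 s₂, ((s₂ : ℝ) - β) * ((s₁ : ℝ) + β)
        = (s₁ : ℝ) * ((s₂ : ℝ) - β) + ((s₂ : ℝ) - β) * β := by
      intro β _; ring
    rw [Finset.sum_congr rfl this, Finset.sum_add_distrib, ← Finset.mul_sum, sumA, sumC]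
  have h3l : ((s₂ : ℝ) ^ 2 - s₂) / (2 * L) ≤ T₃ := by
    rw [reidx, ← e3]
    refine Finset.sum_le_sum fun β hβ => ?_
    obtain ⟨ha, hx, hxS⟩ := mem3 β hβ
    exact (term_bounds ha hx hxS hSL).1
  have h3u : T₃ ≤ ((s₂ : ℝ) ^ 2 - s₂) / (2 * L)
      + ((s₁ : ℝ) * (((s₂ : ℝ) ^ 2 - s₂) / 2) + ((s₂ : ℝ) ^ 3 - s₂) / 6) / (L * (L - S)) := by
    rw [reidx, ← e3']
    refine Finset.sum_le_sum fun β hβ => ?_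
    obtain ⟨ha, hx, hxS⟩ := mem3 β hβ
    exact (term_bounds ha hx hxS hSL).2
  -- combine
  set M := max (S / L) (S ^ 3 / (2 * L * (L - S))) with hM
  have hM1 : S / L ≤ M := le_max_left _ _
  have hM2 : S ^ 3 / (2 * L * (L - S)) ≤ M := le_max_right _ _
  have hM0 : 0 ≤ M := le_trans (by positivity) hM1
  -- absolute value bounds
  have d1 : |T₁ - (s₁ : ℝ) ^ 2 / (2 * L)|
      ≤ (s₁ : ℝ) / (2 * L) + ((s₁ : ℝ) ^ 3 - s₁) / (6 * (L * (L - S))) := by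
    rw [abs_le]
    have key : ((s₁ : ℝ) ^ 2 - s₁) / (2 * L) = (s₁ : ℝ) ^ 2 / (2 * L) - (s₁ : ℝ) / (2 * L) := by
      ring
    have hB : 0 ≤ ((s₁ : ℝ) ^ 3 - s₁) / (6 * (L * (L - S))) := by
      rcases Nat.eq_zero_or_pos s₁ with h | h
      · simp [h]
      · have : (1:ℝ) ≤ s₁ := by exact_mod_cast h
        have : (0:ℝ) ≤ (s₁ : ℝ) ^ 3 - s₁ := by nlinarith
        positivity
    rw [key] at h1l h1u
    have hpos : 0 ≤ (s₁ : ℝ) / (2 * L) := by positivity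
    exact ⟨by linarith, by linarith⟩
  have d2 : |T₂ - (s₁ : ℝ) * s₂ / L|
      ≤ (s₂ : ℝ) * (((s₁ : ℝ) ^ 2 + s₁) / 2) / (L * (L - S)) := by
    rw [abs_le]
    constructor
    · have : (0:ℝ) ≤ (s₂ : ℝ) * (((s₁ : ℝ) ^ 2 + s₁) / 2) / (L * (L - S)) := by positivity
      linarith
    · linarith
  have d3 : |T₃ - (s₂ : ℝ) ^ 2 / (2 * L)|
      ≤ (s₂ : ℝ) / (2 * L)
        + ((s₁ : ℝ) * (((s₂ : ℝ) ^ 2 - s₂) / 2) + ((s₂ : ℝ) ^ 3 - s₂) / 6) / (L * (L - S)) := by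
    rw [abs_le]
    have key : ((s₂ : ℝ) ^ 2 - s₂) / (2 * L) = (s₂ : ℝ) ^ 2 / (2 * L) - (s₂ : ℝ) / (2 * L) := by
      ring
    have hB : 0 ≤ ((s₁ : ℝ) * (((s₂ : ℝ) ^ 2 - s₂) / 2) + ((s₂ : ℝ) ^ 3 - s₂) / 6)
        / (L * (L - S)) := by
      rcases Nat.eq_zero_or_pos s₂ with h | h
      · simp [h]
      · have h1 : (1:ℝ) ≤ s₂ := by exact_mod_cast h
        have h2 : (0:ℝ) ≤ (s₂ : ℝ) ^ 2 - s₂ := by nlinarith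
        have h3 : (0:ℝ) ≤ (s₂ : ℝ) ^ 3 - s₂ := by nlinarith
        positivity
    rw [key] at h3l h3u
    have hpos : 0 ≤ (s₂ : ℝ) / (2 * L) := by positivity
    exact ⟨by linarith, by linarith⟩
  -- the total "extra" part is bounded by S^3/(6 L (L-S))
  have hsum : ((s₁ : ℝ) ^ 3 - s₁) / (6 * (L * (L - S)))
      + (s₂ : ℝ) * (((s₁ : ℝ) ^ 2 + s₁) / 2) / (L * (L - S))
      + ((s₁ : ℝ) * (((s₂ : ℝ) ^ 2 - s₂) / 2) + ((s₂ : ℝ) ^ 3 - s₂) / 6) / (L * (L - S))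
      ≤ S ^ 3 / (6 * (L * (L - S))) := by
    have e : ((s₁ : ℝ) ^ 3 - s₁) / (6 * (L * (L - S)))
        + (s₂ : ℝ) * (((s₁ : ℝ) ^ 2 + s₁) / 2) / (L * (L - S))
        + ((s₁ : ℝ) * (((s₂ : ℝ) ^ 2 - s₂) / 2) + ((s₂ : ℝ) ^ 3 - s₂) / 6) / (L * (L - S))
        = (S ^ 3 - S) / (6 * (L * (L - S))) := by
      rw [hSdef]
      field_simp
      ring
    rw [e]
    gcongr <;> first | positivity | linarith
  -- halves and thirds of M
  have half : S / (2 * L) = (S / L) / 2 := by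
    rw [div_div]; ring_nf
  have third : S ^ 3 / (6 * (L * (L - S))) = (S ^ 3 / (2 * L * (L - S))) / 3 := by
    rw [div_div]; ring_nf
  have hfrac : (s₁ : ℝ) / (2 * L) + (s₂ : ℝ) / (2 * L) = S / (2 * L) := by
    rw [hSdef]; ring
  calc |T₁ - (s₁ : ℝ) ^ 2 / (2 * L)| + |T₂ - (s₁ : ℝ) * s₂ / L|
        + |T₃ - (s₂ : ℝ) ^ 2 / (2 * L)|
      ≤ S / (2 * L) + S ^ 3 / (6 * (L * (L - S))) := by
        rw [← hfrac]; linarith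
    _ = (S / L) / 2 + (S ^ 3 / (2 * L * (L - S))) / 3 := by rw [half, third]
    _ ≤ M / 2 + M / 3 := by gcongr
    _ ≤ M := by linarith
end
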